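/- arXiv:1803.09532 — 3 statements merged into one kernel-verified Lean document; each statement's English description precedes it below -/
import Mathlib

section
/- For every N ≥ 1, every real root x of the probabilists' Hermite polynomial H_N satisfies |x| ≤ 2·√(N−1). -/
open Polynomial

lemma hermite_deriv (n : ℕ) :
    derivative (hermite (n + 1)) = C ((n : ℤ) + 1) * hermite n := by
  induction n with
  | zero => simp [hermite_one, hermite_zero]
  | succ n ih =>
    rw [hermite_succ (n+1), derivative_sub, derivative_mul, derivative_X, one_mul, ih,
      derivative_C_mul, hermite_succ n]
    push_cast
    simp only [map_add, map_one]
    ring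

lemma hermite_rec (n : ℕ) :
    hermite (n + 2) = X * hermite (n + 1) - C ((n : ℤ) + 1) * hermite n := by
  rw [hermite_succ (n+1), hermite_deriv]

/-- Probabilists' Hermite polynomial evaluated at a real number. -/
noncomputable def H (n : ℕ) (x : ℝ) : ℝ := Polynomial.aeval x (Polynomial.hermite n)

lemma H_zero (x : ℝ) : H 0 x = 1 := by simp [H, hermite_zero]
lemma H_one (x : ℝ) : H 1 x = x := by simp [H, hermite_one]

lemma H_rec (n : ℕ) (x : ℝ) : H (n+2) x = x * H (n+1) x - ((n : ℝ) + 1) * H n x := by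
  simp only [H, hermite_rec, map_sub, map_mul, aeval_X, aeval_C]
  push_cast
  ring

lemma H_neg (n : ℕ) (x : ℝ) : H n (-x) = (-1)^n * H n x := by
  induction n using Nat.strong_induction_on with
  | _ n ih =>
    match n with
    | 0 => simp [H_zero]
    | 1 => simp [H_one]
    | (m+2) =>
      rw [H_rec, H_rec, ih (m+1) (by omega), ih m (by omega)]
      ring

lemma H_pos {N : ℕ} {x : ℝ} (hx : 0 < x) (hx2 : 4 * ((N : ℝ) - 1) ≤ x^2) :
    ∀ n, n + 1 ≤ N → 0 < H n x ∧ (x/2) * H n x ≤ H (n+1) x := by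
  intro n
  induction n with
  | zero =>
    intro _
    rw [H_zero, H_one]
    constructor
    · norm_num
    · nlinarith
  | succ n ih =>
    intro hn
    obtain ⟨h0, h1⟩ := ih (by omega)
    have hpos : 0 < H (n+1) x := lt_of_lt_of_le (by positivity) h1
    refine ⟨hpos, ?_⟩
    rw [H_rec]
    have hle : ((n : ℝ) + 1) ≤ (N : ℝ) - 1 := by
      have : (n : ℝ) + 2 ≤ (N : ℝ) := by exact_mod_cast hn
      linarith
    have key : ((n : ℝ) + 1) * H n x ≤ (x/2) * H (n+1) x := by
      have h2 : ((n : ℝ) + 1) * H n x ≤ (x^2/4) * H n x := by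
        have : ((n : ℝ) + 1) ≤ x^2/4 := by linarith
        nlinarith
      have h3 : (x^2/4) * H n x = (x/2) * ((x/2) * H n x) := by ring
      have h4 : (x/2) * ((x/2) * H n x) ≤ (x/2) * H (n+1) x := by
        apply mul_le_mul_of_nonneg_left h1 (by linarith)
      linarith
    linarith

theorem stmt_4 (N : ℕ) (hN : 1 ≤ N) (x : ℝ) (hx : H N x = 0) :
    |x| ≤ 2 * Real.sqrt ((N : ℝ) - 1) := by
  by_contra hlt
  push_neg at hlt
  set y := |x| with hy
  have hy0 : 0 < y := lt_of_le_of_lt (by positivity) hlt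
  have hN1 : (0:ℝ) ≤ (N : ℝ) - 1 := by
    have : (1:ℝ) ≤ N := by exact_mod_cast hN
    linarith
  have hy2 : 4 * ((N : ℝ) - 1) ≤ y^2 := by
    have h := Real.sq_sqrt hN1
    nlinarith [hlt, Real.sqrt_nonneg ((N:ℝ)-1)]
  obtain ⟨h0, h1⟩ := H_pos hy0 hy2 (N-1) (by omega)
  rw [Nat.sub_add_cancel hN] at h1
  have hHN : 0 < H N y := lt_of_lt_of_le (by positivity) h1
  rcases abs_choice x with h | h
  · rw [hy, h, hx] at hHN; exact lt_irrefl 0 hHN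
  · have heq : H N y = (-1)^N * H N x := by rw [hy, h]; exact H_neg N x
    rw [hx, mul_zero] at heq
    rw [heq] at hHN
    exact lt_irrefl 0 hHN
end

section
/- Let ℓ > 0 and α > 0. The eigenfunctions φ_n of the Gaussian kernel are orthonormal in L²(μ_α): for all integers n, m ≥ 0, ∫_ℝ φ_n(x)·φ_m(x) dμ_α(x) equals 1 if n = m and 0 otherwise. -/
open Polynomial MeasureTheory Real

namespace Polynomial

theorem derivative_hermite_succ (n : ℕ) :
    derivative (hermite (n + 1)) = C ((n : ℤ) + 1) * hermite n := by
  induction n with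
  | zero => simp
  | succ k ih =>
    rw [hermite_succ (k + 1), derivative_sub, derivative_mul, derivative_X, one_mul, ih,
      derivative_C_mul, hermite_succ k]
    simp only [map_add, map_natCast, map_one, Nat.cast_add, Nat.cast_one]
    ring

theorem integrable_aeval_mul_exp_neg_mul_sq {R : Type*} [CommSemiring R] [Algebra R ℝ]
    (p : R[X]) {b : ℝ} (hb : 0 < b) :
    Integrable fun x : ℝ => aeval x p * exp (-b * x ^ 2) := by
  simp_rw [aeval_eq_sum_range, Finset.sum_mul, Algebra.smul_def, mul_assoc]
  refine integrable_finsetSum _ fun i _ => Integrable.const_mul ?_ _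
  simpa only [rpow_natCast] using
    integrable_rpow_mul_exp_neg_mul_sq hb (s := i) (by linarith [i.cast_nonneg (α := ℝ)])

theorem integrable_aeval_mul_gaussian {R : Type*} [CommSemiring R] [Algebra R ℝ] (p : R[X]) :
    Integrable fun x : ℝ => aeval x p * exp (-(x ^ 2 / 2)) := by
  simpa only [neg_mul, one_div, inv_mul_eq_div] using
    integrable_aeval_mul_exp_neg_mul_sq p (one_half_pos (α := ℝ))

theorem hasDerivAt_hermite_mul_gaussian (n : ℕ) (x : ℝ) :
    HasDerivAt (fun y : ℝ => aeval y (hermite n) * exp (-(y ^ 2 / 2)))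
      (-(aeval x (hermite (n + 1)) * exp (-(x ^ 2 / 2)))) x := by
  have hsq : HasDerivAt (fun y : ℝ => -(y ^ 2 / 2)) (-x) x := by
    simpa [Pi.neg_def] using ((hasDerivAt_pow 2 x).div_const 2).neg
  refine ((hermite n).hasDerivAt_aeval x |>.mul hsq.exp).congr_deriv ?_
  rw [hermite_succ]
  simp only [map_sub, map_mul, aeval_X]
  ring

theorem integral_hermite_mul_gaussian (n : ℕ) :
    ∫ x : ℝ, aeval x (hermite n) * exp (-(x ^ 2 / 2)) = if n = 0 then √(2 * π) else 0 := by
  cases n with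
  | zero =>
    have := integral_gaussian (1 / 2)
    simp only [hermite_zero, map_one, one_mul, if_true]
    convert this using 3 <;> ring_nf
  | succ k =>
    rw [if_neg k.succ_ne_zero, ← neg_eq_zero, ← integral_neg]
    exact integral_eq_zero_of_hasDerivAt_of_integrable (hasDerivAt_hermite_mul_gaussian k)
      (integrable_aeval_mul_gaussian _).neg (integrable_aeval_mul_gaussian _)

theorem integrable_aeval_mul_aeval_mul_gaussian {R : Type*} [CommSemiring R] [Algebra R ℝ]
    (p q : R[X]) :
    Integrable fun x : ℝ => aeval x p * (aeval x q * exp (-(x ^ 2 / 2))) := by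
  simpa only [map_mul, mul_assoc] using integrable_aeval_mul_gaussian (p * q)

theorem integral_hermite_succ_mul_hermite_succ_mul_gaussian (k m : ℕ) :
    ∫ x : ℝ, aeval x (hermite (k + 1)) * (aeval x (hermite (m + 1)) * exp (-(x ^ 2 / 2))) =
      (k + 1) * ∫ x : ℝ, aeval x (hermite k) * (aeval x (hermite m) * exp (-(x ^ 2 / 2))) := by
  have hu (x : ℝ) : HasDerivAt (fun y : ℝ => aeval y (hermite (k + 1)))
      ((k + 1) * aeval x (hermite k)) x := by
    refine ((hermite (k + 1)).hasDerivAt_aeval x).congr_deriv ?_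
    rw [derivative_hermite_succ]
    simp
  have ibp := integral_mul_deriv_eq_deriv_mul_of_integrable (fun x _ => hu x)
    (fun x _ => hasDerivAt_hermite_mul_gaussian m x)
    (by simpa only [Pi.mul_def, mul_neg, Pi.neg_def] using
      (integrable_aeval_mul_aeval_mul_gaussian (hermite (k + 1)) (hermite (m + 1))).neg)
    (by simpa only [Pi.mul_def, mul_assoc] using
      (integrable_aeval_mul_aeval_mul_gaussian (hermite k) (hermite m)).const_mul ((k : ℝ) + 1))
    (integrable_aeval_mul_aeval_mul_gaussian (hermite (k + 1)) (hermite m))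
  simpa only [mul_neg, integral_neg, neg_inj, mul_assoc, integral_const_mul] using ibp

theorem integral_hermite_mul_hermite_mul_gaussian (n m : ℕ) :
    ∫ x : ℝ, aeval x (hermite n) * (aeval x (hermite m) * exp (-(x ^ 2 / 2))) =
      if n = m then √(2 * π) * n.factorial else 0 := by
  induction m generalizing n with
  | zero =>
    simp only [hermite_zero, map_one, one_mul, integral_hermite_mul_gaussian n]
    split_ifs <;> simp_all
  | succ m ih =>
    cases n with
    | zero =>
      simpa [eq_comm] using integral_hermite_mul_gaussian (m + 1)
    | succ k =>
      rw [integral_hermite_succ_mul_hermite_succ_mul_gaussian, ih, Nat.factorial_succ]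
      by_cases h : k = m
      · subst h
        simp only [if_true]
        push_cast
        ring
      · simp [h]

theorem integral_hermite_mul_hermite_mul_gaussian_comp_mul {c : ℝ} (hc : 0 < c) (n m : ℕ) :
    ∫ x : ℝ, aeval (c * x) (hermite n) * (aeval (c * x) (hermite m) * exp (-((c * x) ^ 2 / 2))) =
      if n = m then √(2 * π) * n.factorial / c else 0 := by
  rw [Measure.integral_comp_mul_left (fun x => aeval x (hermite n) *
      (aeval x (hermite m) * exp (-(x ^ 2 / 2)))) c,
    integral_hermite_mul_hermite_mul_gaussian, abs_of_pos (inv_pos.mpr hc), smul_eq_mul]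
  split_ifs
  · field_simp
  · simp

end Polynomial

theorem stmt_9_general (α : ℝ) (hα : 0 < α)
    (ε β δ2 : ℝ)
    (hβ : β = (1 + (2 * ε / α) ^ 2) ^ ((1 : ℝ) / 4))
    (hδ2 : δ2 = α ^ 2 * (β ^ 2 - 1) / 2)
    (φ : ℕ → ℝ → ℝ)
    (hφ : ∀ n x, φ n x = Real.sqrt (β / (n.factorial : ℝ)) * Real.exp (-δ2 * x ^ 2) *
      H n (Real.sqrt 2 * α * β * x))
    (n m : ℕ) :
    ∫ x : ℝ, φ n x * φ m x * (α / Real.sqrt Real.pi * Real.exp (-(α ^ 2 * x ^ 2))) =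
      if n = m then 1 else 0 := by
  have hβ_pos : 0 < β := hβ ▸ rpow_pos_of_pos (by positivity) _
  set c := √2 * α * β
  have hc : 0 < c := by positivity
  have hweight (x : ℝ) : exp (-δ2 * x ^ 2) * exp (-δ2 * x ^ 2) * exp (-(α ^ 2 * x ^ 2)) =
      exp (-((c * x) ^ 2 / 2)) := by
    rw [← exp_add, ← exp_add, hδ2, mul_pow, mul_pow, mul_pow, sq_sqrt zero_le_two]
    ring_nf
  have hintegrand (x : ℝ) :
      φ n x * φ m x * (α / √π * exp (-(α ^ 2 * x ^ 2))) = √(β / n.factorial) *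
        √(β / m.factorial) * (α / √π) * (aeval (c * x) (hermite n) *
          (aeval (c * x) (hermite m) * exp (-((c * x) ^ 2 / 2)))) := by
    rw [hφ, hφ, H, H, ← hweight]
    ring
  simp_rw [hintegrand, integral_const_mul, integral_hermite_mul_hermite_mul_gaussian_comp_mul hc]
  split_ifs with h
  · subst h
    rw [mul_self_sqrt (by positivity), sqrt_mul zero_le_two]
    field_simp
    ring
  · rw [mul_zero]

theorem stmt_9 (ℓ α : ℝ) (hℓ : 0 < ℓ) (hα : 0 < α)
    (ε β δ2 : ℝ)
    (hε : ε = 1 / (Real.sqrt 2 * ℓ))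
    (hβ : β = (1 + (2 * ε / α) ^ 2) ^ ((1 : ℝ) / 4))
    (hδ2 : δ2 = α ^ 2 * (β ^ 2 - 1) / 2)
    (φ : ℕ → ℝ → ℝ)
    (hφ : ∀ n x, φ n x = Real.sqrt (β / (n.factorial : ℝ)) * Real.exp (-δ2 * x ^ 2) *
      H n (Real.sqrt 2 * α * β * x))
    (n m : ℕ) :
    ∫ x : ℝ, φ n x * φ m x * (α / Real.sqrt Real.pi * Real.exp (-(α ^ 2 * x ^ 2))) =
      if n = m then 1 else 0 :=
  stmt_9_general α hα ε β δ2 hβ hδ2 φ hφ n m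
end

section
/- Let ℓ > 0, α > 0, and N ≥ 1. Let x_1^GH, …, x_N^GH and w_1^GH, …, w_N^GH be the nodes and weights of the N-point Gauss–Hermite rule. Define the scaled nodes x̃_n = x_n^GH/(√2·α·β) and the weights w̃_n = (1+2δ²)^{−1/2} · w_n^GH · e^{δ²·x̃_n²} · ∑_{m=0}^{⌊(N−1)/2⌋} (1/(2^m·m!)) · (2α²β²/(1+2δ²) − 1)^m · H_{2m}(x_n^GH). Then for every j = 0, 1, …, N−1: ∑_{n=1}^N w̃_n · φ_j(x̃_n) = ∫_ℝ φ_j dμ. -/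
open MeasureTheory ProbabilityTheory

/-- The standard Gaussian measure on ℝ. -/
noncomputable def stdGauss : Measure ℝ := gaussianReal 0 1

/-!
Put `t = √2 α β`, `σ = (1 + 2δ²)^(-1/2)` and `τ = t σ`, so that the coefficient
`2α²β²/(1 + 2δ²) - 1` in the weights is `τ² - 1`, and let
`W = ∑_{m ≤ (N-1)/2} (τ² - 1)^m / (2^m m!) H_{2m}`. The factor `e^{δ² x̃²}` of the new weights
cancels the Gaussian factor of `φ_j`, so the rule applied to `φ_j` is `√(β/j!) σ` times the
Gauss–Hermite rule applied to the polynomial `W H_j`, of degree at most `2N - 1`; exactness turns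
it into `√(β/j!) σ ∫ W H_j dμ`. On the other side the substitution `x = σ y` absorbs `e^{-δ² x²}`
into the Gaussian: `∫ φ_j dμ = √(β/j!) σ ∫ H_j(τ y) dμ(y)`. Both Gaussian integrals follow from
Stein's identity `∫ x p dμ = ∫ p' dμ`: it gives the orthogonality `∫ H_m H_k dμ = k! δ_{mk}` and
the recursion `∫ H_{n+2}(τ·) dμ = (n+1)(τ² - 1) ∫ H_n(τ·) dμ`, and for `j < N` both sides equal
`(2r)! (τ² - 1)^r / (2^r r!)` if `j = 2r` and vanish if `j` is odd.
-/

open Polynomial Real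

theorem Polynomial.derivative_hermite_succ_s12 (n : ℕ) :
    derivative (hermite (n + 1)) = (n + 1) • hermite n := by
  induction n with
  | zero => simp
  | succ n ih =>
    rw [hermite_succ (n + 1), derivative_sub, derivative_mul, derivative_X, ih, derivative_smul,
      hermite_succ n]
    simp only [nsmul_eq_mul]
    push_cast
    ring

noncomputable def hermiteReal (n : ℕ) : ℝ[X] := (hermite n).map (Int.castRingHom ℝ)

theorem hermiteReal_zero : hermiteReal 0 = 1 := by simp [hermiteReal]

theorem hermiteReal_succ (n : ℕ) :
    hermiteReal (n + 1) = X * hermiteReal n - derivative (hermiteReal n) := by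
  simp [hermiteReal, hermite_succ, derivative_map]

theorem derivative_hermiteReal_succ (n : ℕ) :
    derivative (hermiteReal (n + 1)) = (n + 1 : ℝ) • hermiteReal n := by
  rw [hermiteReal, derivative_map, derivative_hermite_succ_s12, nsmul_eq_mul, Polynomial.map_mul]
  simp [hermiteReal, smul_eq_C_mul]

theorem natDegree_hermiteReal_le (n : ℕ) : (hermiteReal n).natDegree ≤ n :=
  natDegree_map_le.trans natDegree_hermite.le

theorem eval_hermiteReal (n : ℕ) (x : ℝ) : (hermiteReal n).eval x = H n x := by
  rw [H, aeval_def, algebraMap_int_eq, eval₂_eq_eval_map]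
  rfl

theorem integrable_eval_mul_exp_neg_mul_sq {b : ℝ} (hb : 0 < b) (p : ℝ[X]) :
    Integrable fun x => p.eval x * rexp (-b * x ^ 2) := by
  simp_rw [eval_eq_sum_range, Finset.sum_mul]
  refine integrable_finsetSum _ fun i _ => ?_
  have hi : (-1 : ℝ) < i := by linarith [i.cast_nonneg (α := ℝ)]
  simpa [mul_assoc, rpow_natCast] using
    (integrable_rpow_mul_exp_neg_mul_sq hb hi).const_mul (p.coeff i)

theorem integrable_eval_stdGauss (p : ℝ[X]) : Integrable (fun x => p.eval x) stdGauss := by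
  simp_rw [eval_eq_sum_range]
  refine integrable_finsetSum _ fun i _ => Integrable.const_mul ?_ _
  refine ((memLp_id_gaussianReal i).integrable_norm_pow').mono' (by fun_prop) ?_
  exact ae_of_all _ fun x => by simp

theorem integral_stdGauss_eq (f : ℝ → ℝ) :
    ∫ x, f x ∂stdGauss = (√(2 * π))⁻¹ * ∫ x, f x * rexp (-(1 / 2) * x ^ 2) := by
  rw [stdGauss, integral_gaussianReal_eq_integral_smul one_ne_zero, ← integral_const_mul]
  congr 1 with x
  simp only [gaussianPDFReal, smul_eq_mul, NNReal.coe_one, mul_one, sub_zero]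
  ring_nf

noncomputable def gaussianPolyIntegral : ℝ[X] →ₗ[ℝ] ℝ where
  toFun p := ∫ x, p.eval x ∂stdGauss
  map_add' p q := by
    simp only [eval_add]
    exact integral_add (integrable_eval_stdGauss p) (integrable_eval_stdGauss q)
  map_smul' c p := by simp [integral_const_mul]

theorem gaussianPolyIntegral_apply (p : ℝ[X]) :
    gaussianPolyIntegral p = ∫ x, p.eval x ∂stdGauss := rfl

theorem gaussianPolyIntegral_one : gaussianPolyIntegral 1 = 1 := by
  simp [gaussianPolyIntegral_apply, stdGauss]

theorem hasDerivAt_exp_neg_half_sq (x : ℝ) :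
    HasDerivAt (fun x => rexp (-(1 / 2) * x ^ 2)) (-x * rexp (-(1 / 2) * x ^ 2)) x := by
  convert ((hasDerivAt_pow 2 x).const_mul (-(1 / 2) : ℝ)).exp using 1
  ring

theorem gaussianPolyIntegral_X_mul (p : ℝ[X]) :
    gaussianPolyIntegral (X * p) = gaussianPolyIntegral (derivative p) := by
  simp only [gaussianPolyIntegral_apply, integral_stdGauss_eq, eval_mul, eval_X]
  congr 1
  have hint (q : ℝ[X]) := integrable_eval_mul_exp_neg_mul_sq (by norm_num : (0 : ℝ) < 1 / 2) q
  have hparts := integral_mul_deriv_eq_deriv_mul_of_integrable (fun x _ => p.hasDerivAt x)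
    (fun x _ => hasDerivAt_exp_neg_half_sq x) ?_ (hint (derivative p)) (hint p)
  · rw [← neg_neg (∫ x, (derivative p).eval x * _), ← hparts, ← integral_neg]
    congr 1 with x
    ring
  · refine (hint (X * p)).neg.congr (ae_of_all _ fun x => ?_)
    simp only [eval_mul, eval_X, Pi.mul_apply, Pi.neg_apply]
    ring

theorem gaussianPolyIntegral_mul_X_mul_sub_derivative (p q : ℝ[X]) :
    gaussianPolyIntegral (p * (X * q - derivative q)) =
      gaussianPolyIntegral (derivative p * q) := by
  rw [show p * (X * q - derivative q) = X * (p * q) - p * derivative q by ring, map_sub,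
    gaussianPolyIntegral_X_mul, derivative_mul, map_add, add_sub_cancel_right]

theorem gaussianPolyIntegral_hermiteReal_mul_hermiteReal (m k : ℕ) :
    gaussianPolyIntegral (hermiteReal m * hermiteReal k) =
      if m = k then (k.factorial : ℝ) else 0 := by
  induction k generalizing m with
  | zero =>
    cases m with
    | zero => simp [hermiteReal_zero, gaussianPolyIntegral_one]
    | succ m =>
      rw [hermiteReal_zero, mul_one, ← one_mul (hermiteReal _), hermiteReal_succ,
        gaussianPolyIntegral_mul_X_mul_sub_derivative]
      simp
  | succ k ih =>
    rw [hermiteReal_succ, gaussianPolyIntegral_mul_X_mul_sub_derivative]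
    cases m with
    | zero => simp [hermiteReal_zero]
    | succ m =>
      rw [derivative_hermiteReal_succ, smul_mul_assoc, map_smul, ih, smul_eq_mul]
      split_ifs with h h' h'
      · subst h; push_cast [Nat.factorial_succ]; ring
      · omega
      · omega
      · simp

theorem gaussianPolyIntegral_hermiteReal_comp_add_two (τ : ℝ) (n : ℕ) :
    gaussianPolyIntegral ((hermiteReal (n + 2)).comp (C τ * X)) =
      (n + 1) * (τ ^ 2 - 1) * gaussianPolyIntegral ((hermiteReal n).comp (C τ * X)) := by
  have hderiv (k : ℕ) : derivative ((hermiteReal (k + 1)).comp (C τ * X)) =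
      (τ * (k + 1)) • (hermiteReal k).comp (C τ * X) := by
    rw [derivative_comp, derivative_hermiteReal_succ, smul_comp, derivative_C_mul_X, smul_eq_C_mul,
      smul_eq_C_mul, ← mul_assoc, ← C_mul]
  rw [hermiteReal_succ, sub_comp, mul_comp, X_comp, derivative_hermiteReal_succ, smul_comp,
    mul_assoc, ← smul_eq_C_mul, map_sub, map_smul, map_smul, gaussianPolyIntegral_X_mul, hderiv,
    map_smul]
  simp only [smul_eq_mul]
  ring

theorem gaussianPolyIntegral_hermiteReal_comp_odd (τ : ℝ) (r : ℕ) :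
    gaussianPolyIntegral ((hermiteReal (2 * r + 1)).comp (C τ * X)) = 0 := by
  induction r with
  | zero =>
    have hX : gaussianPolyIntegral X = 0 := by
      simpa using gaussianPolyIntegral_X_mul 1
    rw [mul_zero, zero_add, ← zero_add 1, hermiteReal_succ, hermiteReal_zero, derivative_one,
      sub_zero, mul_one, X_comp, ← smul_eq_C_mul, map_smul, hX, smul_zero]
  | succ r ih => rw [show 2 * (r + 1) + 1 = 2 * r + 1 + 2 by ring,
      gaussianPolyIntegral_hermiteReal_comp_add_two, ih, mul_zero]

theorem gaussianPolyIntegral_hermiteReal_comp_even (τ : ℝ) (r : ℕ) :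
    gaussianPolyIntegral ((hermiteReal (2 * r)).comp (C τ * X)) =
      1 / (2 ^ r * r.factorial : ℝ) * (τ ^ 2 - 1) ^ r * (2 * r).factorial := by
  induction r with
  | zero => simp [hermiteReal_zero, gaussianPolyIntegral_one]
  | succ r ih =>
    rw [show 2 * (r + 1) = 2 * r + 2 by ring, gaussianPolyIntegral_hermiteReal_comp_add_two, ih]
    push_cast [Nat.factorial_succ]
    field_simp
    ring

-- Truncated Hermite expansion of the density of `N(0, τ²)` with respect to `N(0, 1)`.
noncomputable def hermiteWeight (τ : ℝ) (M : ℕ) : ℝ[X] :=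
  ∑ m ∈ Finset.range M, C (1 / (2 ^ m * m.factorial : ℝ) * (τ ^ 2 - 1) ^ m) * hermiteReal (2 * m)

theorem natDegree_hermiteWeight_le (τ : ℝ) (M : ℕ) :
    (hermiteWeight τ M).natDegree ≤ 2 * (M - 1) :=
  natDegree_sum_le_of_forall_le _ _ fun m hm => (natDegree_C_mul_le _ _).trans <|
    (natDegree_hermiteReal_le _).trans (by rw [Finset.mem_range] at hm; omega)

theorem gaussianPolyIntegral_hermiteWeight_mul_hermiteReal (τ : ℝ) {M j : ℕ} (hj : j < 2 * M) :
    gaussianPolyIntegral (hermiteWeight τ M * hermiteReal j) =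
      gaussianPolyIntegral ((hermiteReal j).comp (C τ * X)) := by
  conv_lhs => simp only [hermiteWeight, Finset.sum_mul, map_sum, C_mul', smul_mul_assoc, map_smul,
    gaussianPolyIntegral_hermiteReal_mul_hermiteReal, smul_eq_mul, mul_ite, mul_zero]
  rcases Nat.even_or_odd' j with ⟨r, rfl | rfl⟩
  · have hr : r < M := by omega
    simp only [mul_eq_mul_left_iff, two_ne_zero, or_false, Finset.sum_ite_eq', Finset.mem_range, hr,
      if_true, gaussianPolyIntegral_hermiteReal_comp_even]
  · rw [Finset.sum_eq_zero fun m _ => if_neg (by omega), gaussianPolyIntegral_hermiteReal_comp_odd]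

theorem integral_exp_neg_mul_sq_mul_stdGauss {b : ℝ} (hb : 0 < 1 + 2 * b) (f : ℝ → ℝ) :
    ∫ x, rexp (-b * x ^ 2) * f x ∂stdGauss =
      √(1 / (1 + 2 * b)) * ∫ y, f (√(1 / (1 + 2 * b)) * y) ∂stdGauss := by
  set σ := √(1 / (1 + 2 * b))
  have hσ : 0 < σ := by positivity
  have hσ2 : σ ^ 2 * (1 + 2 * b) = 1 := by
    rw [sq_sqrt (by positivity)]
    field_simp
  set g : ℝ → ℝ := fun x => rexp (-b * x ^ 2) * f x * rexp (-(1 / 2) * x ^ 2)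
  have hg (y : ℝ) : f (σ * y) * rexp (-(1 / 2) * y ^ 2) = g (σ * y) := by
    simp only [g, mul_right_comm _ (f _), ← exp_add, mul_comm (f _)]
    congr 2
    linear_combination (1 / 2 * y ^ 2) * hσ2
  rw [integral_stdGauss_eq, integral_stdGauss_eq, mul_left_comm]
  congr 1
  simp_rw [hg]
  rw [Measure.integral_comp_mul_left, smul_eq_mul, abs_of_pos (inv_pos.2 hσ), mul_inv_cancel_left₀
    hσ.ne']

theorem stmt_12_general (α : ℝ) (hα : 0 < α)
    (ε β δ2 : ℝ)
    (hβ : β = (1 + (2 * ε / α) ^ 2) ^ ((1 : ℝ) / 4))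
    (hδ2 : δ2 = α ^ 2 * (β ^ 2 - 1) / 2)
    (φ : ℕ → ℝ → ℝ)
    (hφ : ∀ n x, φ n x = Real.sqrt (β / (n.factorial : ℝ)) * Real.exp (-δ2 * x ^ 2) *
      H n (Real.sqrt 2 * α * β * x))
    (N : ℕ)
    (xGH wGH : Fin N → ℝ)
    (hexact : ∀ p : Polynomial ℝ, p.natDegree ≤ 2 * N - 1 →
      ∑ n, wGH n * p.eval (xGH n) = ∫ t, p.eval t ∂stdGauss)
    (xt wt : Fin N → ℝ)
    (hxt : ∀ n, xt n = xGH n / (Real.sqrt 2 * α * β))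
    (hwt : ∀ n, wt n = Real.sqrt (1 / (1 + 2 * δ2)) * wGH n * Real.exp (δ2 * xt n ^ 2) *
      ∑ m ∈ Finset.range ((N - 1) / 2 + 1),
        (1 / (2 ^ m * (m.factorial : ℝ))) * (2 * α ^ 2 * β ^ 2 / (1 + 2 * δ2) - 1) ^ m *
          H (2 * m) (xGH n))
    (j : ℕ) (hj : j < N) :
    ∑ n, wt n * φ j (xt n) = ∫ t, φ j t ∂stdGauss := by
  have hβ1 : 1 ≤ β := hβ ▸ one_le_rpow (le_add_of_nonneg_right (sq_nonneg _)) (by norm_num)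
  have hδ2pos : 0 < 1 + 2 * δ2 := by
    nlinarith [mul_nonneg (sq_nonneg α) (sub_nonneg.2 (one_le_pow₀ (n := 2) hβ1))]
  set t := √2 * α * β
  have ht : t ≠ 0 := by positivity
  set σ := √(1 / (1 + 2 * δ2))
  have hc : 2 * α ^ 2 * β ^ 2 / (1 + 2 * δ2) - 1 = (t * σ) ^ 2 - 1 := by
    rw [mul_pow, mul_pow, mul_pow, sq_sqrt zero_le_two, sq_sqrt (by positivity)]
    ring
  set P := hermiteWeight (t * σ) ((N - 1) / 2 + 1) * hermiteReal j
  have hP : P.natDegree ≤ 2 * N - 1 := natDegree_mul_le.trans <| (add_le_add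
    (natDegree_hermiteWeight_le _ _) (natDegree_hermiteReal_le j)).trans (by omega)
  have hnode (n : Fin N) :
      wt n * φ j (xt n) = √(β / j.factorial) * σ * (wGH n * P.eval (xGH n)) := by
    have hx : t * xt n = xGH n := by rw [hxt n]; field_simp
    simp only [hwt n, hφ j, hx, P, hermiteWeight, hc, eval_mul, eval_finsetSum, eval_C,
      eval_hermiteReal, neg_mul, exp_neg]
    field_simp
  calc ∑ n, wt n * φ j (xt n) = √(β / j.factorial) * σ * gaussianPolyIntegral P := by
        rw [gaussianPolyIntegral_apply, ← hexact P hP, Finset.mul_sum]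
        exact Finset.sum_congr rfl fun n _ => hnode n
    _ = √(β / j.factorial) * σ * gaussianPolyIntegral ((hermiteReal j).comp (C (t * σ) * X)) := by
        rw [gaussianPolyIntegral_hermiteWeight_mul_hermiteReal _ (by omega)]
    _ = √(β / j.factorial) * ∫ x, rexp (-δ2 * x ^ 2) * H j (t * x) ∂stdGauss := by
        rw [integral_exp_neg_mul_sq_mul_stdGauss hδ2pos, gaussianPolyIntegral_apply]
        simp only [eval_comp, eval_mul, eval_C, eval_X, eval_hermiteReal, mul_assoc]
        rfl
    _ = ∫ x, φ j x ∂stdGauss := by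
        rw [← integral_const_mul]
        simp only [hφ, mul_assoc]

theorem stmt_12 (ℓ α : ℝ) (hℓ : 0 < ℓ) (hα : 0 < α)
    (ε β δ2 : ℝ)
    (hε : ε = 1 / (Real.sqrt 2 * ℓ))
    (hβ : β = (1 + (2 * ε / α) ^ 2) ^ ((1 : ℝ) / 4))
    (hδ2 : δ2 = α ^ 2 * (β ^ 2 - 1) / 2)
    (φ : ℕ → ℝ → ℝ)
    (hφ : ∀ n x, φ n x = Real.sqrt (β / (n.factorial : ℝ)) * Real.exp (-δ2 * x ^ 2) *
      H n (Real.sqrt 2 * α * β * x))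
    (N : ℕ) (hN : 1 ≤ N)
    (xGH wGH : Fin N → ℝ)
    (hinj : Function.Injective xGH)
    (hroot : ∀ n, H N (xGH n) = 0)
    (hexact : ∀ p : Polynomial ℝ, p.natDegree ≤ 2 * N - 1 →
      ∑ n, wGH n * p.eval (xGH n) = ∫ t, p.eval t ∂stdGauss)
    (xt wt : Fin N → ℝ)
    (hxt : ∀ n, xt n = xGH n / (Real.sqrt 2 * α * β))
    (hwt : ∀ n, wt n = Real.sqrt (1 / (1 + 2 * δ2)) * wGH n * Real.exp (δ2 * xt n ^ 2) *
      ∑ m ∈ Finset.range ((N - 1) / 2 + 1),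
        (1 / (2 ^ m * (m.factorial : ℝ))) * (2 * α ^ 2 * β ^ 2 / (1 + 2 * δ2) - 1) ^ m *
          H (2 * m) (xGH n))
    (j : ℕ) (hj : j < N) :
    ∑ n, wt n * φ j (xt n) = ∫ t, φ j t ∂stdGauss :=
  stmt_12_general α hα ε β δ2 hβ hδ2 φ hφ N xGH wGH hexact xt wt hxt hwt j hj
end
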